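/- For every natural number n > 1, the dimensionality of γ(n) equals m, where p_m is the greatest prime factor of n. -/

import Mathlib

/-!
For `n ≥ 2`, `γ n` is the concatenation of the `m` blocks `(γ aᵢ)`. Every `γ a` is a Dyck
word, so each block is balanced while all its proper nonempty prefixes have positive height.
Hence the nonempty balanced prefixes of `γ n` are exactly the `m` block boundaries.
-/

/-- The standard RPF natural spelling function.  `true` = '(' and `false` = ')'.
For `n ≥ 2`, `γ n` is the concatenation over `i = 0, …, m-1` of `"(" ++ γ aᵢ ++ ")"`,
where `aᵢ` is the exponent of the `i`-th prime (`Nat.nth Nat.Prime i`, 0-indexed, so the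
0th prime is 2) in the factorization of `n`, and the `(m-1)`-st prime is the greatest
prime factor of `n` (so `m = Nat.count Nat.Prime (gpf n) + 1`). -/
noncomputable def gamma : ℕ → List Bool
  | 0 => []
  | 1 => [true, false]
  | (n+2) =>
    ((List.range (Nat.count Nat.Prime ((n+2).factorization.support.sup id) + 1)).map
      (fun i => (true :: gamma ((n+2).factorization (Nat.nth Nat.Prime i))) ++ [false])).flatten
termination_by n => n
decreasing_by exact Nat.factorization_lt _ (by omega)

/-- The dimensionality of a Dyck word: the number of outermost matching parenthesis
pairs, i.e. the number of nonempty balanced prefixes. -/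
def dyckDim (w : List Bool) : ℕ :=
  ((List.range (w.length + 1)).filter
    (fun k => decide (0 < k) &&
      decide ((w.take k).count true = (w.take k).count false))).length

def dyckHeight (w : List Bool) : ℤ := w.count true - w.count false

@[simp] lemma dyckHeight_nil : dyckHeight [] = 0 := by simp [dyckHeight]

@[simp] lemma dyckHeight_cons (b : Bool) (w : List Bool) :
    dyckHeight (b :: w) = (if b then 1 else -1) + dyckHeight w := by
  cases b <;> simp [dyckHeight] <;> ring

@[simp] lemma dyckHeight_append (a b : List Bool) :
    dyckHeight (a ++ b) = dyckHeight a + dyckHeight b := by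
  simp only [dyckHeight, List.count_append]; push_cast; ring

def IsDyck (w : List Bool) : Prop := dyckHeight w = 0 ∧ ∀ k, 0 ≤ dyckHeight (w.take k)

lemma IsDyck.nil : IsDyck [] := ⟨dyckHeight_nil, fun _ => by simp⟩

lemma IsDyck.append {a b : List Bool} (ha : IsDyck a) (hb : IsDyck b) : IsDyck (a ++ b) := by
  refine ⟨by simp [ha.1, hb.1], fun k => ?_⟩
  rw [List.take_append, dyckHeight_append]
  exact add_nonneg (ha.2 k) (hb.2 _)

lemma IsDyck.flatten {L : List (List Bool)} (h : ∀ w ∈ L, IsDyck w) : IsDyck L.flatten := by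
  induction L with
  | nil => exact IsDyck.nil
  | cons a L ih => exact (h a (by simp)).append (ih fun w hw => h w (by simp [hw]))

lemma IsDyck.wrap {w : List Bool} (hw : IsDyck w) : IsDyck (true :: w ++ [false]) := by
  refine ⟨by simp [hw.1], fun k => ?_⟩
  cases k with
  | zero => simp
  | succ k =>
    rw [List.cons_append, List.take_succ_cons, dyckHeight_cons, List.take_append,
      dyckHeight_append]
    have : -1 ≤ dyckHeight ([false].take (k - w.length)) := by
      cases k - w.length <;> simp
    have := hw.2 k
    simp only [if_true]
    omega

lemma dyckDim_eq_countP (w : List Bool) :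
    dyckDim w = (List.range w.length).countP (fun j => dyckHeight (w.take (j + 1)) = 0) := by
  rw [dyckDim, ← List.countP_eq_length_filter, List.range_succ_eq_map, List.countP_cons,
    List.countP_map]
  simp [Function.comp_def, dyckHeight, sub_eq_zero]

lemma dyckDim_append {a b : List Bool} (ha : dyckHeight a = 0) :
    dyckDim (a ++ b) = dyckDim a + dyckDim b := by
  simp only [dyckDim_eq_countP, List.length_append, List.range_add, List.countP_append,
    List.countP_map]
  congr 1
  · refine List.countP_congr fun j hj => ?_
    rw [List.take_append_of_le_length (List.mem_range.1 hj)]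
  · refine List.countP_congr fun j _ => ?_
    simp only [Function.comp_apply, decide_eq_true_eq]
    rw [add_assoc, List.take_length_add_append, dyckHeight_append, ha, zero_add]

lemma dyckDim_wrap {w : List Bool} (hw : IsDyck w) : dyckDim (true :: w ++ [false]) = 1 := by
  rw [dyckDim_eq_countP]
  have hlen : (true :: w ++ [false]).length = (w.length + 1) + 1 := by simp
  have hinner : ∀ j ∈ List.range (w.length + 1),
      ¬ dyckHeight ((true :: w ++ [false]).take (j + 1)) = 0 := by
    intro j hj
    rw [List.cons_append, List.take_succ_cons, dyckHeight_cons,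
      List.take_append_of_le_length (Nat.lt_succ_iff.1 (List.mem_range.1 hj))]
    have := hw.2 j
    simp only [if_true]
    omega
  have hfull : dyckHeight ((true :: w ++ [false]).take (w.length + 1 + 1)) = 0 := by
    rw [← hlen, List.take_length]
    simp [hw.1]
  rw [hlen, List.range_succ, List.countP_append,
    List.countP_eq_zero.2 fun j hj => by simpa using hinner j hj, List.countP_singleton]
  simp only [hfull, decide_true, if_true]

lemma dyckDim_flatten {L : List (List Bool)} (h : ∀ w ∈ L, dyckHeight w = 0) :
    dyckDim L.flatten = (L.map dyckDim).sum := by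
  induction L with
  | nil => simp [dyckDim]
  | cons a L ih =>
    rw [List.flatten_cons, dyckDim_append (h a (by simp)), ih fun w hw => h w (by simp [hw])]
    simp

lemma dyckDim_flatten_map_wrap {ι : Type*} (l : List ι) {f : ι → List Bool}
    (hf : ∀ i, IsDyck (f i)) :
    dyckDim (l.map fun i => true :: f i ++ [false]).flatten = l.length := by
  rw [dyckDim_flatten (by simpa using fun i _ => (hf i).wrap.1)]
  have hone : (dyckDim ∘ fun i => true :: f i ++ [false]) = fun _ => 1 :=
    funext fun i => dyckDim_wrap (hf i)
  rw [List.map_map, hone, List.map_const', List.sum_replicate, smul_eq_mul, mul_one]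

lemma isDyck_gamma (n : ℕ) : IsDyck (gamma n) := by
  induction n using Nat.strong_induction_on with
  | _ n ih =>
    match n with
    | 0 => rw [gamma]; exact IsDyck.nil
    | 1 => rw [gamma]; exact IsDyck.nil.wrap
    | n + 2 =>
      rw [gamma]
      refine IsDyck.flatten fun w hw => ?_
      obtain ⟨i, -, rfl⟩ := List.mem_map.1 hw
      exact (ih _ (Nat.factorization_lt _ (by omega))).wrap

/-- For every `n > 1`, the dimensionality of `γ n` equals `m`, where the
`m`-th prime (1-indexed; i.e. `Nat.nth Nat.Prime (m-1)`) is the greatest prime factor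
of `n`.  Here `m = Nat.count Nat.Prime (gpf n) + 1` with
`gpf n = n.factorization.support.sup id`. -/
theorem dim_gamma (n : ℕ) (hn : 2 ≤ n) :
    dyckDim (gamma n) = Nat.count Nat.Prime (n.factorization.support.sup id) + 1 := by
  obtain ⟨n, rfl⟩ : ∃ m, n = m + 2 := ⟨n - 2, by omega⟩
  rw [gamma, dyckDim_flatten_map_wrap _ fun _ => isDyck_gamma _, List.length_range]
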